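/- arXiv:math/0509193 — 3 statements merged into one kernel-verified Lean document; each statement's English description precedes it below -/
import Mathlib

section
/- (Local Harnack inequality) Let L = A + W with a_{x,y}>0 symmetric and W ≥ 0. Let V₁ ⊂ V and suppose x ∼ y with x, y ∈ int(V₁). If Lf ≥ 0 on int(V₁) and f > 0 on V₁, then a_{x,y}/(W(x)+Σ_{z∼x}a_{x,z}) ≤ f(x)/f(y) ≤ (W(y)+Σ_{z∼y}a_{y,z})/a_{x,y}. -/
open scoped BigOperators Classical

/-- The elliptic operator `A f (x) = ∑_{y ~ x} a x y * (f x - f y)` (real-valued functions). -/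
noncomputable def opA {V : Type*} (G : SimpleGraph V) [G.LocallyFinite] (a : V → V → ℝ)
    (f : V → ℝ) (x : V) : ℝ :=
  ∑ y ∈ G.neighborFinset x, a x y * (f x - f y)

/-- The elliptic operator on complex-valued functions. -/
noncomputable def opAC {V : Type*} (G : SimpleGraph V) [G.LocallyFinite] (a : V → V → ℝ)
    (f : V → ℂ) (x : V) : ℂ :=
  ∑ y ∈ G.neighborFinset x, (a x y : ℂ) * (f x - f y)

/-- The interior of a set of vertices: points of `S` all of whose neighbors lie in `S`. -/
def intSet {V : Type*} (G : SimpleGraph V) (S : Set V) : Set V :=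
  {x | x ∈ S ∧ ∀ y, G.Adj x y → y ∈ S}

/-- The interior of a finite set of vertices. -/
noncomputable def intFin {V : Type*} (G : SimpleGraph V) [G.LocallyFinite] (U : Finset V) :
    Finset V :=
  U.filter fun x => ∀ y ∈ G.neighborFinset x, y ∈ U

lemma opA_eq_sum_mul_sub_sum {V : Type*} (G : SimpleGraph V) [G.LocallyFinite]
    (a : V → V → ℝ) (f : V → ℝ) (x : V) :
    opA G a f x = (∑ z ∈ G.neighborFinset x, a x z) * f x
      - ∑ z ∈ G.neighborFinset x, a x z * f z := by
  simp only [opA, mul_sub, Finset.sum_sub_distrib, Finset.sum_mul]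

lemma neighbor_mul_le_of_supersolution {V : Type*} (G : SimpleGraph V) [G.LocallyFinite]
    (a : V → V → ℝ) (W f : V → ℝ) {x y : V}
    (ha : ∀ z, G.Adj x z → 0 ≤ a x z) (hf : ∀ z, G.Adj x z → 0 ≤ f z)
    (hL : 0 ≤ W x * f x + opA G a f x) (hadj : G.Adj x y) :
    a x y * f y ≤ (W x + ∑ z ∈ G.neighborFinset x, a x z) * f x := by
  have hy : y ∈ G.neighborFinset x := (G.mem_neighborFinset x y).mpr hadj
  calc a x y * f y ≤ ∑ z ∈ G.neighborFinset x, a x z * f z :=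
        Finset.single_le_sum (f := fun z => a x z * f z) (fun z hz =>
          mul_nonneg (ha z ((G.mem_neighborFinset x z).mp hz))
            (hf z ((G.mem_neighborFinset x z).mp hz))) hy
    _ ≤ (W x + ∑ z ∈ G.neighborFinset x, a x z) * f x := by
        rw [opA_eq_sum_mul_sub_sum] at hL
        linarith

theorem local_harnack_general {V : Type*} (G : SimpleGraph V) [G.LocallyFinite]
    (a : V → V → ℝ) (hsym : ∀ x y, a x y = a y x) (hpos : ∀ x y, G.Adj x y → 0 < a x y)
    (W : V → ℝ) (V₁ : Set V)
    (f : V → ℝ)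
    (hf : ∀ x ∈ intSet G V₁, 0 ≤ W x * f x + opA G a f x)
    (hfpos : ∀ x ∈ V₁, 0 < f x)
    (x y : V) (hadj : G.Adj x y) (hx : x ∈ intSet G V₁) (hy : y ∈ intSet G V₁) :
    a x y / (W x + ∑ z ∈ G.neighborFinset x, a x z) ≤ f x / f y ∧
    f x / f y ≤ (W y + ∑ z ∈ G.neighborFinset y, a y z) / a x y := by
  have hfx : 0 < f x := hfpos x hx.1
  have hfy : 0 < f y := hfpos y hy.1
  have haxy : 0 < a x y := hpos x y hadj
  have hxy := neighbor_mul_le_of_supersolution G a W f (fun z h => (hpos x z h).le)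
    (fun z h => (hfpos z (hx.2 z h)).le) (hf x hx) hadj
  have hyx := neighbor_mul_le_of_supersolution G a W f (fun z h => (hpos y z h).le)
    (fun z h => (hfpos z (hy.2 z h)).le) (hf y hy) hadj.symm
  rw [← hsym x y] at hyx
  have hDx : 0 < W x + ∑ z ∈ G.neighborFinset x, a x z :=
    pos_of_mul_pos_left ((mul_pos haxy hfy).trans_le hxy) hfx.le
  constructor
  · rw [div_le_div_iff₀ hDx hfy]
    linarith
  · rw [div_le_div_iff₀ hfy haxy]
    linarith

/-- Local Harnack inequality for positive supersolutions of L = A + W. -/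
theorem local_harnack {V : Type*} (G : SimpleGraph V) [G.LocallyFinite] (hG : G.Connected)
    (a : V → V → ℝ) (hsym : ∀ x y, a x y = a y x) (hpos : ∀ x y, G.Adj x y → 0 < a x y)
    (W : V → ℝ) (hW : ∀ x, 0 ≤ W x) (V₁ : Set V)
    (f : V → ℝ)
    (hf : ∀ x ∈ intSet G V₁, 0 ≤ W x * f x + opA G a f x)
    (hfpos : ∀ x ∈ V₁, 0 < f x)
    (x y : V) (hadj : G.Adj x y) (hx : x ∈ intSet G V₁) (hy : y ∈ intSet G V₁) :
    a x y / (W x + ∑ z ∈ G.neighborFinset x, a x z) ≤ f x / f y ∧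
    f x / f y ≤ (W y + ∑ z ∈ G.neighborFinset y, a y z) / a x y :=
  local_harnack_general G a hsym hpos W V₁ f hf hfpos x y hadj hx hy
end

section
/- (Existence of ground state) Let L = A + W on a connected countable graph G where a_{x,y}=a_{y,x}>0 for edges, each vertex has finite valence, and W is bounded below. Let λ₀ = inf over nonzero finitely supported f of (Lf,f)/(f,f). Then there exists a function φ: V → ℝ with φ > 0 everywhere and Lφ = λ₀ φ pointwise. -/
open scoped BigOperators Classical

/-!
Take balls `Bₙ` around a base vertex `o`. Minimizing the energy `∑ (L f) f` over functions supported
in `Bₙ` with `∑ f² = 1`, and replacing the minimizer by its absolute value (which does not raise the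
energy), gives a nonnegative Dirichlet eigenfunction `φₙ` with eigenvalue `λₙ`; every finitely
supported test function lives in some `Bₙ`, so `λₙ → λ₀`. At a vertex where `L ψ = λ ψ` with
`ψ ≥ 0` and `λ ≥ μ`, one has the Harnack inequality
`a x y ψ(y) ≤ (W x + ∑_z a x z - μ) ψ(x)`; iterated along walks, it makes the `φₙ` positive at `o`
and, once normalized by `φₙ(o) = 1`, pointwise bounded. A pointwise limit then solves `L φ = λ₀ φ`
with `φ(o) = 1`, and the same inequality along walks to `o` makes `φ` positive everywhere.
-/

open Filter Function Topology

namespace SimpleGraph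

variable {V : Type*} (G : SimpleGraph V) [G.LocallyFinite]

noncomputable def nbhdFinset (U : Finset V) : Finset V :=
  U ∪ U.biUnion fun x => G.neighborFinset x

noncomputable def ballFinset (o : V) (n : ℕ) : Finset V :=
  G.nbhdFinset^[n] {o}

variable {G}

lemma subset_nbhdFinset (U : Finset V) : U ⊆ G.nbhdFinset U :=
  Finset.subset_union_left

lemma neighborFinset_subset_nbhdFinset {U : Finset V} {x : V} (hx : x ∈ U) :
    G.neighborFinset x ⊆ G.nbhdFinset U :=
  fun _ hy => Finset.mem_union_right _ (Finset.mem_biUnion.2 ⟨x, hx, hy⟩)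

lemma ballFinset_succ (o : V) (n : ℕ) :
    G.ballFinset o (n + 1) = G.nbhdFinset (G.ballFinset o n) :=
  iterate_succ_apply' _ _ _

lemma ballFinset_mono (o : V) : Monotone (G.ballFinset o) :=
  monotone_nat_of_le_succ fun n => by
    rw [ballFinset_succ]; exact subset_nbhdFinset _

lemma mem_ballFinset_self (o : V) (n : ℕ) : o ∈ G.ballFinset o n :=
  ballFinset_mono o (Nat.zero_le n) (Finset.mem_singleton_self o)

lemma mem_ballFinset_of_walk {o u x : V} (w : G.Walk u x) {n : ℕ}
    (hu : u ∈ G.ballFinset o n) : x ∈ G.ballFinset o (n + w.length) := by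
  induction w generalizing n with
  | nil => exact hu
  | cons h p ih =>
    have hv := neighborFinset_subset_nbhdFinset hu ((mem_neighborFinset _ _ _).2 h)
    rw [← ballFinset_succ] at hv
    simpa [Walk.length_cons, add_assoc, add_comm 1] using ih hv

lemma eventually_mem_ballFinset (hG : G.Connected) (o x : V) :
    ∀ᶠ n in atTop, x ∈ G.ballFinset o n := by
  obtain ⟨w⟩ := hG o x
  refine eventually_atTop.2 ⟨w.length, fun n hn => ballFinset_mono o hn ?_⟩
  simpa using mem_ballFinset_of_walk w (mem_ballFinset_self o 0)

lemma eventually_subset_ballFinset (hG : G.Connected) (o : V) {s : Set V} (hs : s.Finite) :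
    ∀ᶠ n in atTop, s ⊆ G.ballFinset o n :=
  (hs.eventually_all).2 fun x _ => eventually_mem_ballFinset hG o x

lemma exists_walk_support_subset_ballFinset {o x : V} {n : ℕ} (hx : x ∈ G.ballFinset o n) :
    ∃ w : G.Walk o x, ∀ v ∈ w.support, v ∈ G.ballFinset o n := by
  induction n generalizing x with
  | zero =>
    obtain rfl : x = o := Finset.mem_singleton.1 hx
    exact ⟨Walk.nil, by simpa using hx⟩
  | succ n ih =>
    rw [ballFinset_succ, nbhdFinset, Finset.mem_union, Finset.mem_biUnion] at hx
    rcases hx with hx | ⟨u, hu, hux⟩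
    · obtain ⟨w, hw⟩ := ih hx
      exact ⟨w, fun v hv => ballFinset_mono o n.le_succ (hw v hv)⟩
    · obtain ⟨w, hw⟩ := ih hu
      refine ⟨w.concat ((mem_neighborFinset _ _ _).1 hux), fun v hv => ?_⟩
      rw [Walk.support_concat, List.mem_append, List.mem_singleton] at hv
      rcases hv with hv | rfl
      · exact ballFinset_mono o n.le_succ (hw v hv)
      · rw [ballFinset_succ]
        exact neighborFinset_subset_nbhdFinset hu hux

end SimpleGraph

section Operator

variable {V : Type*} (G : SimpleGraph V) [G.LocallyFinite] (a : V → V → ℝ) (W : V → ℝ)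

noncomputable def opL (f : V → ℝ) (x : V) : ℝ :=
  W x * f x + opA G a f x

lemma opA_add (f g : V → ℝ) (x : V) : opA G a (f + g) x = opA G a f x + opA G a g x := by
  simp only [opA, ← Finset.sum_add_distrib, Pi.add_apply]
  exact Finset.sum_congr rfl fun _ _ => by ring

lemma opA_smul (t : ℝ) (f : V → ℝ) (x : V) : opA G a (t • f) x = t * opA G a f x := by
  simp only [opA, Finset.mul_sum, Pi.smul_apply, smul_eq_mul]
  exact Finset.sum_congr rfl fun _ _ => by ring

lemma opA_eq_sub (f : V → ℝ) (x : V) : opA G a f x =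
    (∑ y ∈ G.neighborFinset x, a x y) * f x - ∑ y ∈ G.neighborFinset x, a x y * f y := by
  simp only [opA, Finset.sum_mul, ← Finset.sum_sub_distrib]
  exact Finset.sum_congr rfl fun _ _ => by ring

lemma opL_add (f g : V → ℝ) (x : V) : opL G a W (f + g) x = opL G a W f x + opL G a W g x := by
  simp only [opL, opA_add, Pi.add_apply]; ring

lemma opL_smul (t : ℝ) (f : V → ℝ) (x : V) : opL G a W (t • f) x = t * opL G a W f x := by
  simp only [opL, opA_smul, Pi.smul_apply, smul_eq_mul]; ring

lemma continuous_opL (x : V) : Continuous fun f : V → ℝ => opL G a W f x := by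
  unfold opL opA; fun_prop

end Operator

section Green

variable {V : Type*} {G : SimpleGraph V} [G.LocallyFinite] {a : V → V → ℝ}

lemma two_mul_sum_opA_mul (hsym : ∀ x y, a x y = a y x) {U : Finset V} (f : V → ℝ) {g : V → ℝ}
    (hg : support g ⊆ U) :
    2 * ∑ x ∈ U, opA G a f x * g x = ∑ x ∈ G.nbhdFinset U, ∑ y ∈ G.nbhdFinset U,
      if G.Adj x y then a x y * (f x - f y) * (g x - g y) else 0 := by
  set T := G.nbhdFinset U
  have hg0 : ∀ x ∉ U, g x = 0 := support_subset_iff'.1 hg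
  have hrow : ∀ x ∈ T, opA G a f x * g x =
      ∑ y ∈ T, if G.Adj x y then a x y * (f x - f y) * g x else 0 := by
    intro x _
    by_cases hx : x ∈ U
    · have hN : T.filter (G.Adj x) = G.neighborFinset x := by
        ext y
        simp only [Finset.mem_filter, SimpleGraph.mem_neighborFinset, and_iff_right_iff_imp]
        exact fun h => SimpleGraph.neighborFinset_subset_nbhdFinset hx
          ((SimpleGraph.mem_neighborFinset _ _ _).2 h)
      rw [← Finset.sum_filter, hN, opA, Finset.sum_mul]
    · simp [hg0 x hx]
  have hswap : ∑ x ∈ T, ∑ y ∈ T, (if G.Adj x y then a x y * (f x - f y) * g x else 0) =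
      ∑ x ∈ T, ∑ y ∈ T, if G.Adj x y then a x y * (f y - f x) * g y else 0 := by
    rw [Finset.sum_comm]
    refine Finset.sum_congr rfl fun x _ => Finset.sum_congr rfl fun y _ => ?_
    simp only [G.adj_comm y x, hsym y x]
  rw [Finset.sum_subset (SimpleGraph.subset_nbhdFinset (G := G) U)
    fun x _ hx => by rw [hg0 x hx, mul_zero], Finset.sum_congr rfl hrow, two_mul]
  nth_rw 2 [hswap]
  rw [← Finset.sum_add_distrib]
  refine Finset.sum_congr rfl fun x _ => ?_
  rw [← Finset.sum_add_distrib]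
  refine Finset.sum_congr rfl fun y _ => ?_
  split_ifs <;> ring

lemma sum_opA_mul_comm (hsym : ∀ x y, a x y = a y x) {U : Finset V} {f g : V → ℝ}
    (hf : support f ⊆ U) (hg : support g ⊆ U) :
    ∑ x ∈ U, opA G a f x * g x = ∑ x ∈ U, opA G a g x * f x := by
  suffices 2 * ∑ x ∈ U, opA G a f x * g x = 2 * ∑ x ∈ U, opA G a g x * f x by linarith
  rw [two_mul_sum_opA_mul hsym f hg, two_mul_sum_opA_mul hsym g hf]
  refine Finset.sum_congr rfl fun x _ => Finset.sum_congr rfl fun y _ => ?_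
  split_ifs <;> ring

lemma sum_opA_mul_self_nonneg (hsym : ∀ x y, a x y = a y x)
    (hpos : ∀ x y, G.Adj x y → 0 < a x y) {U : Finset V} {f : V → ℝ} (hf : support f ⊆ U) :
    0 ≤ ∑ x ∈ U, opA G a f x * f x := by
  have h := two_mul_sum_opA_mul (G := G) hsym f hf
  have : 0 ≤ ∑ x ∈ G.nbhdFinset U, ∑ y ∈ G.nbhdFinset U,
      if G.Adj x y then a x y * (f x - f y) * (f x - f y) else 0 :=
    Finset.sum_nonneg fun x _ => Finset.sum_nonneg fun y _ => by
      split_ifs with hxy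
      · rw [mul_assoc]; exact mul_nonneg (hpos x y hxy).le (mul_self_nonneg _)
      · exact le_rfl
  linarith

lemma sum_opA_abs_mul_abs_le (hsym : ∀ x y, a x y = a y x)
    (hpos : ∀ x y, G.Adj x y → 0 < a x y) {U : Finset V} {f : V → ℝ} (hf : support f ⊆ U) :
    ∑ x ∈ U, opA G a |f| x * |f| x ≤ ∑ x ∈ U, opA G a f x * f x := by
  have habs : support |f| ⊆ U := fun x hx => hf (by simpa using hx)
  suffices 2 * ∑ x ∈ U, opA G a |f| x * |f| x ≤ 2 * ∑ x ∈ U, opA G a f x * f x by linarith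
  rw [two_mul_sum_opA_mul hsym _ habs, two_mul_sum_opA_mul hsym _ hf]
  refine Finset.sum_le_sum fun x _ => Finset.sum_le_sum fun y _ => ?_
  split_ifs with hxy
  · simp only [mul_assoc, Pi.abs_apply]
    refine mul_le_mul_of_nonneg_left ?_ (hpos x y hxy).le
    nlinarith [abs_mul_abs_self (f x), abs_mul_abs_self (f y), abs_mul (f x) (f y),
      le_abs_self (f x * f y)]
  · exact le_rfl

end Green

section Energy

variable {V : Type*} (G : SimpleGraph V) [G.LocallyFinite] (a : V → V → ℝ) (W : V → ℝ)

noncomputable def energy (U : Finset V) (f : V → ℝ) : ℝ :=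
  ∑ x ∈ U, opL G a W f x * f x

noncomputable def mass (U : Finset V) (f : V → ℝ) : ℝ :=
  ∑ x ∈ U, f x * f x

variable {G a W}

lemma energy_eq_add (U : Finset V) (f : V → ℝ) :
    energy G a W U f = ∑ x ∈ U, W x * (f x * f x) + ∑ x ∈ U, opA G a f x * f x := by
  rw [energy, ← Finset.sum_add_distrib]
  exact Finset.sum_congr rfl fun x _ => by rw [opL]; ring

lemma mass_nonneg (U : Finset V) (f : V → ℝ) : 0 ≤ mass U f :=
  Finset.sum_nonneg fun _ _ => mul_self_nonneg _

lemma eq_zero_of_mass_eq_zero {U : Finset V} {f : V → ℝ} (hf : support f ⊆ U)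
    (h : mass U f = 0) : f = 0 := by
  funext x
  by_cases hx : x ∈ U
  · exact mul_self_eq_zero.1
      ((Finset.sum_eq_zero_iff_of_nonneg fun _ _ => mul_self_nonneg _).1 h x hx)
  · exact support_subset_iff'.1 hf x hx

lemma mass_pos {U : Finset V} {f : V → ℝ} (hf : support f ⊆ U) (hf0 : f ≠ 0) : 0 < mass U f :=
  (mass_nonneg U f).lt_of_ne fun h => hf0 (eq_zero_of_mass_eq_zero hf h.symm)

lemma mass_abs (U : Finset V) (f : V → ℝ) : mass U |f| = mass U f :=
  Finset.sum_congr rfl fun x _ => abs_mul_abs_self (f x)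

lemma mass_smul (U : Finset V) (t : ℝ) (f : V → ℝ) : mass U (t • f) = t ^ 2 * mass U f := by
  rw [mass, mass, Finset.mul_sum]
  exact Finset.sum_congr rfl fun x _ => by simp only [Pi.smul_apply, smul_eq_mul]; ring

lemma energy_smul (U : Finset V) (t : ℝ) (f : V → ℝ) :
    energy G a W U (t • f) = t ^ 2 * energy G a W U f := by
  rw [energy, energy, Finset.mul_sum]
  exact Finset.sum_congr rfl fun x _ => by
    simp only [opL_smul, Pi.smul_apply, smul_eq_mul]; ring

lemma energy_sub_const (μ : ℝ) (U : Finset V) (f : V → ℝ) :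
    energy G a (fun x => W x - μ) U f = energy G a W U f - μ * mass U f := by
  rw [energy, energy, mass, Finset.mul_sum, ← Finset.sum_sub_distrib]
  exact Finset.sum_congr rfl fun x _ => by simp only [opL]; ring

lemma energy_abs_le (hsym : ∀ x y, a x y = a y x) (hpos : ∀ x y, G.Adj x y → 0 < a x y)
    {U : Finset V} {f : V → ℝ} (hf : support f ⊆ U) : energy G a W U |f| ≤ energy G a W U f := by
  rw [energy_eq_add, energy_eq_add]
  have hW : ∑ x ∈ U, W x * (|f| x * |f| x) = ∑ x ∈ U, W x * (f x * f x) :=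
    Finset.sum_congr rfl fun x _ => by rw [Pi.abs_apply, abs_mul_abs_self]
  linarith [sum_opA_abs_mul_abs_le hsym hpos hf]

lemma mul_mass_le_energy (hsym : ∀ x y, a x y = a y x) (hpos : ∀ x y, G.Adj x y → 0 < a x y)
    {c : ℝ} (hW : ∀ x, c ≤ W x) {U : Finset V} {f : V → ℝ} (hf : support f ⊆ U) :
    c * mass U f ≤ energy G a W U f := by
  rw [energy_eq_add, mass, Finset.mul_sum]
  have : ∑ x ∈ U, c * (f x * f x) ≤ ∑ x ∈ U, W x * (f x * f x) :=
    Finset.sum_le_sum fun x _ => mul_le_mul_of_nonneg_right (hW x) (mul_self_nonneg _)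
  linarith [sum_opA_mul_self_nonneg hsym hpos hf]

lemma energy_add_smul (hsym : ∀ x y, a x y = a y x) {U : Finset V} {f g : V → ℝ}
    (hf : support f ⊆ U) (hg : support g ⊆ U) (t : ℝ) : energy G a W U (f + t • g) =
      energy G a W U f + 2 * t * ∑ x ∈ U, opL G a W f x * g x + t ^ 2 * energy G a W U g := by
  have hcomm : ∑ x ∈ U, opL G a W g x * f x = ∑ x ∈ U, opL G a W f x * g x := by
    simp only [opL, add_mul, Finset.sum_add_distrib, sum_opA_mul_comm hsym hg hf]
    congr 1
    exact Finset.sum_congr rfl fun x _ => by ring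
  have hexp : ∀ x, opL G a W (f + t • g) x * (f + t • g) x = opL G a W f x * f x +
      t * (opL G a W f x * g x + opL G a W g x * f x) + t ^ 2 * (opL G a W g x * g x) := by
    intro x
    simp only [opL_add, opL_smul, Pi.add_apply, Pi.smul_apply, smul_eq_mul]; ring
  simp only [energy, hexp, Finset.sum_add_distrib, ← Finset.mul_sum, hcomm]
  ring

end Energy

section Variational

variable {V : Type*} {G : SimpleGraph V} [G.LocallyFinite] {a : V → V → ℝ} {W : V → ℝ}

lemma opL_sub_const (μ : ℝ) (f : V → ℝ) (x : V) :
    opL G a (fun x => W x - μ) f x = opL G a W f x - μ * f x := by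
  simp only [opL]; ring

lemma opL_eq_zero_of_energy_nonneg (hsym : ∀ x y, a x y = a y x) {U : Finset V} {φ : V → ℝ}
    (hφ : support φ ⊆ U) (hmin : ∀ f, support f ⊆ U → 0 ≤ energy G a W U f)
    (hφ0 : energy G a W U φ = 0) {x : V} (hx : x ∈ U) : opL G a W φ x = 0 := by
  -- `t ↦ E(φ + t δₓ) = 2 t (L φ)(x) + t² E(δₓ)` is nonnegative, so its linear coefficient vanishes.
  set δ : V → ℝ := Pi.single x 1
  have hδ : support δ ⊆ U := (Pi.support_single_subset).trans (by simpa using hx)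
  have hpair : ∑ z ∈ U, opL G a W φ z * δ z = opL G a W φ x := by
    simp [δ, Pi.single_apply, hx]
  have hquad : ∀ t, 0 ≤ energy G a W U δ * (t * t) + 2 * opL G a W φ x * t + 0 := fun t => by
    have := hmin (φ + t • δ) ((support_add _ _).trans
      (Set.union_subset hφ ((support_smul_subset_right _ _).trans hδ)))
    rw [energy_add_smul hsym hφ hδ, hφ0, hpair] at this
    linarith
  have := discrim_le_zero hquad
  rw [discrim] at this
  nlinarith [sq_nonneg (opL G a W φ x)]

lemma exists_min_energy_of_mass_eq_one (U : Finset V) (hU : U.Nonempty) :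
    ∃ φ : V → ℝ, support φ ⊆ U ∧ mass U φ = 1 ∧
      ∀ f, support f ⊆ U → mass U f = 1 → energy G a W U φ ≤ energy G a W U f := by
  set K : Set (V → ℝ) := {f | support f ⊆ U ∧ mass U f = 1}
  have hclosed : IsClosed K := by
    have hsupp : IsClosed {f : V → ℝ | support f ⊆ U} := by
      simp only [support_subset_iff', Set.ofPred_forall]
      exact isClosed_iInter fun x => isClosed_iInter fun _ =>
        isClosed_eq (continuous_apply x) continuous_const
    exact hsupp.inter (isClosed_eq (by unfold mass; fun_prop) continuous_const)
  have hbdd : K ⊆ Set.univ.pi fun _ => Set.Icc (-1) 1 := by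
    rintro f ⟨hsupp, hmass⟩ x -
    by_cases hx : x ∈ U
    · have : f x * f x ≤ 1 :=
        hmass ▸ Finset.single_le_sum (fun y _ => mul_self_nonneg (f y)) hx
      exact abs_le.1 ((sq_le_one_iff_abs_le_one _).1 (by nlinarith))
    · simp [support_subset_iff'.1 hsupp x hx]
  have hcompact : IsCompact K :=
    (isCompact_univ_pi fun _ => isCompact_Icc).of_isClosed_subset hclosed hbdd
  obtain ⟨u, hu⟩ := hU
  have hne : K.Nonempty :=
    ⟨Pi.single u 1, Pi.support_single_subset.trans (by simpa using hu),
      by simp [mass, Pi.single_apply, hu]⟩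
  have hcont : Continuous (energy G a W U) := by unfold energy opL opA; fun_prop
  obtain ⟨φ, ⟨hsupp, hmass⟩, hmin⟩ := hcompact.exists_isMinOn hne hcont.continuousOn
  exact ⟨φ, hsupp, hmass, fun f hf hmf => hmin ⟨hf, hmf⟩⟩

end Variational

section GroundState

variable {V : Type*} {G : SimpleGraph V} [G.LocallyFinite] {a : V → V → ℝ} {W : V → ℝ}

variable (G a W) in
noncomputable def rayleigh (f : V → ℝ) : ℝ :=
  (∑ᶠ x, (W x * f x + opA G a f x) * f x) / ∑ᶠ x, f x * f x

variable (G a W) in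
def rayleighSet : Set ℝ :=
  {r | ∃ f : V → ℝ, (support f).Finite ∧ f ≠ 0 ∧ r = rayleigh G a W f}

lemma rayleigh_eq {U : Finset V} {f : V → ℝ} (hf : support f ⊆ U) :
    rayleigh G a W f = energy G a W U f / mass U f := by
  rw [rayleigh, finsum_eq_sum_of_support_subset _ ((support_mul_subset_right _ _).trans hf),
    finsum_eq_sum_of_support_subset _ ((support_mul_subset_right _ _).trans hf)]
  rfl

lemma le_rayleigh (hsym : ∀ x y, a x y = a y x) (hpos : ∀ x y, G.Adj x y → 0 < a x y) {c : ℝ}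
    (hW : ∀ x, c ≤ W x) {f : V → ℝ} (hf : (support f).Finite) (hf0 : f ≠ 0) :
    c ≤ rayleigh G a W f := by
  have hU : support f ⊆ hf.toFinset := by simp
  rw [rayleigh_eq hU, le_div_iff₀ (mass_pos hU hf0)]
  exact mul_mass_le_energy hsym hpos hW hU

lemma mul_mass_le_energy_of_forall_mass_eq_one {U : Finset V} {μ : ℝ}
    (h : ∀ f, support f ⊆ U → mass U f = 1 → μ ≤ energy G a W U f) {f : V → ℝ}
    (hf : support f ⊆ U) : μ * mass U f ≤ energy G a W U f := by
  rcases (mass_nonneg U f).eq_or_lt with h0 | h0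
  · rw [eq_zero_of_mass_eq_zero hf h0.symm]
    simp [energy, mass]
  set t := (√(mass U f))⁻¹
  have ht : t ^ 2 * mass U f = 1 := by
    rw [inv_pow, Real.sq_sqrt h0.le, inv_mul_cancel₀ h0.ne']
  have := h (t • f) ((support_smul_subset_right _ _).trans hf) (by rw [mass_smul, ht])
  rw [energy_smul] at this
  calc μ * mass U f ≤ t ^ 2 * energy G a W U f * mass U f :=
        mul_le_mul_of_nonneg_right this h0.le
    _ = energy G a W U f := by linear_combination energy G a W U f * ht

lemma exists_dirichlet_ground_state (hsym : ∀ x y, a x y = a y x)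
    (hpos : ∀ x y, G.Adj x y → 0 < a x y) (U : Finset V) (hU : U.Nonempty) :
    ∃ φ : V → ℝ, support φ ⊆ U ∧ 0 ≤ φ ∧ φ ≠ 0 ∧
      (∀ f, support f ⊆ U → f ≠ 0 → rayleigh G a W φ ≤ rayleigh G a W f) ∧
      ∀ x ∈ U, opL G a W φ x = rayleigh G a W φ * φ x := by
  obtain ⟨g, hg, hgmass, hgmin⟩ :=
    exists_min_energy_of_mass_eq_one (G := G) (a := a) (W := W) U hU
  set φ := |g|
  have hφ : support φ ⊆ U := fun x hx => hg (by simpa [φ] using hx)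
  have hmass : mass U φ = 1 := (mass_abs U g).trans hgmass
  set μ := energy G a W U φ
  have hmin : ∀ f, support f ⊆ U → μ * mass U f ≤ energy G a W U f :=
    fun f => mul_mass_le_energy_of_forall_mass_eq_one fun f hf hmf =>
      (energy_abs_le hsym hpos hg).trans (hgmin f hf hmf)
  have hμ : rayleigh G a W φ = μ := by rw [rayleigh_eq hφ, hmass, div_one]
  refine ⟨φ, hφ, fun x => abs_nonneg (g x), fun h => by simp [h, mass] at hmass, ?_, ?_⟩
  · intro f hf hf0
    rw [hμ, rayleigh_eq hf, le_div_iff₀ (mass_pos hf hf0)]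
    exact hmin f hf
  · intro x hx
    -- With the potential shifted by `μ`, minimality says the energy is nonnegative and
    -- vanishes at `φ`.
    have := opL_eq_zero_of_energy_nonneg (G := G) (W := fun x => W x - μ) hsym hφ
      (fun f hf => by rw [energy_sub_const]; linarith [hmin f hf])
      (by rw [energy_sub_const, hmass, mul_one, sub_self]) hx
    rw [opL_sub_const] at this
    rw [hμ]; linarith

lemma harnack_adj (hpos : ∀ x y, G.Adj x y → 0 < a x y) {μ lam : ℝ} (hμ : μ ≤ lam)
    {ψ : V → ℝ} (hψ : 0 ≤ ψ) {x y : V} (hx : opL G a W ψ x = lam * ψ x) (hxy : G.Adj x y) :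
    a x y * ψ y ≤ (W x + ∑ z ∈ G.neighborFinset x, a x z - μ) * ψ x := by
  have hnonneg : ∀ z ∈ G.neighborFinset x, 0 ≤ a x z * ψ z := fun z hz =>
    mul_nonneg (hpos x z ((G.mem_neighborFinset x z).1 hz)).le (hψ z)
  have hy := Finset.single_le_sum hnonneg ((G.mem_neighborFinset x y).2 hxy)
  rw [opL, opA_eq_sub] at hx
  nlinarith [mul_le_mul_of_nonneg_right hμ (hψ x)]

lemma exists_harnack_const (hpos : ∀ x y, G.Adj x y → 0 < a x y) (μ : ℝ) {u v : V}
    (w : G.Walk u v) : ∃ C : ℝ, 0 ≤ C ∧ ∀ (ψ : V → ℝ) (lam : ℝ), μ ≤ lam → 0 ≤ ψ →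
      (∀ x ∈ w.support, opL G a W ψ x = lam * ψ x) → ψ v ≤ C * ψ u := by
  induction w with
  | nil => exact ⟨1, zero_le_one, fun ψ _ _ _ _ => (one_mul _).ge⟩
  | @cons u v' v hadj p ih =>
    obtain ⟨C, hC, hCp⟩ := ih
    set K := max 0 ((W u + ∑ z ∈ G.neighborFinset u, a u z - μ) / a u v')
    refine ⟨C * K, mul_nonneg hC (le_max_left _ _), fun ψ lam hμ hψ heq => ?_⟩
    have hedge : ψ v' ≤ K * ψ u := by
      have := harnack_adj hpos hμ hψ (heq u (by simp)) hadj
      have ha := hpos u v' hadj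
      calc ψ v' ≤ (W u + ∑ z ∈ G.neighborFinset u, a u z - μ) / a u v' * ψ u := by
            rw [div_mul_eq_mul_div, le_div_iff₀ ha]; linarith
        _ ≤ K * ψ u := mul_le_mul_of_nonneg_right (le_max_right _ _) (hψ u)
    calc ψ v ≤ C * ψ v' := hCp ψ lam hμ hψ fun x hx => heq x (by simp [hx])
      _ ≤ C * (K * ψ u) := mul_le_mul_of_nonneg_left hedge hC
      _ = C * K * ψ u := by ring

lemma pos_of_pos_of_walk (hpos : ∀ x y, G.Adj x y → 0 < a x y) {ψ : V → ℝ} {lam : ℝ}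
    (hψ : 0 ≤ ψ) {u v : V} (w : G.Walk u v) (heq : ∀ x ∈ w.support, opL G a W ψ x = lam * ψ x)
    (hv : 0 < ψ v) : 0 < ψ u := by
  obtain ⟨C, -, hC⟩ := exists_harnack_const hpos lam w
  have := hC ψ lam le_rfl hψ heq
  by_contra! h
  rw [le_antisymm h (hψ u), mul_zero] at this
  linarith

end GroundState

lemma tendsto_csInf_of_forall_eventually_le {ι : Type*} {l : Filter ι} {S : Set ℝ}
    (hS : BddBelow S) {u : ι → ℝ} (hu : ∀ i, u i ∈ S) (h : ∀ r ∈ S, ∀ᶠ i in l, u i ≤ r) :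
    Tendsto u l (𝓝 (sInf S)) := by
  refine tendsto_order.2 ⟨fun b hb => Eventually.of_forall fun i =>
    hb.trans_le (csInf_le hS (hu i)), fun b hb => ?_⟩
  rcases isEmpty_or_nonempty ι with hι | ⟨⟨i⟩⟩
  · exact Eventually.of_forall fun i => isEmptyElim i
  obtain ⟨r, hr, hrb⟩ := exists_lt_of_csInf_lt ⟨u i, hu i⟩ hb
  exact (h r hr).mono fun i hi => hi.trans_lt hrb

section Exhaustion

variable {V : Type*} {G : SimpleGraph V} [G.LocallyFinite] {a : V → V → ℝ} {W : V → ℝ}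

lemma exists_ground_state_ballFinset (hsym : ∀ x y, a x y = a y x)
    (hpos : ∀ x y, G.Adj x y → 0 < a x y) (o : V) (n : ℕ) :
    ∃ (ψ : V → ℝ) (lam : ℝ), 0 ≤ ψ ∧ ψ o = 1 ∧ lam ∈ rayleighSet G a W ∧
      (∀ x ∈ G.ballFinset o n, opL G a W ψ x = lam * ψ x) ∧
      ∀ f, support f ⊆ G.ballFinset o n → f ≠ 0 → lam ≤ rayleigh G a W f := by
  obtain ⟨φ, hφ, hφ0, hφne, hmin, heq⟩ := exists_dirichlet_ground_state (W := W) hsym hpos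
    (G.ballFinset o n) ⟨o, SimpleGraph.mem_ballFinset_self o n⟩
  set lam := rayleigh G a W φ
  have ho : 0 < φ o := by
    obtain ⟨z, hz⟩ := Function.ne_iff.1 hφne
    obtain ⟨w, hw⟩ := SimpleGraph.exists_walk_support_subset_ballFinset (hφ hz)
    exact pos_of_pos_of_walk hpos hφ0 w (fun x hx => heq x (hw x hx)) ((hφ0 z).lt_of_ne' hz)
  refine ⟨(φ o)⁻¹ • φ, lam, smul_nonneg (inv_nonneg.2 ho.le) hφ0, inv_mul_cancel₀ ho.ne',
    ⟨φ, (G.ballFinset o n).finite_toSet.subset hφ, hφne, rfl⟩, fun x hx => ?_, hmin⟩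
  rw [opL_smul, heq x hx, Pi.smul_apply, smul_eq_mul, mul_left_comm]

lemma exists_nonneg_solution_of_tendsto (hG : G.Connected)
    (hpos : ∀ x y, G.Adj x y → 0 < a x y) {o : V} {ψ : ℕ → V → ℝ} {lam : ℕ → ℝ} {lam0 : ℝ}
    (hlam : Tendsto lam atTop (𝓝 lam0)) (hlam0 : ∀ n, lam0 ≤ lam n) (hψ0 : ∀ n, 0 ≤ ψ n)
    (hψo : ∀ n, ψ n o = 1) (heq : ∀ x, ∀ᶠ n in atTop, opL G a W (ψ n) x = lam n * ψ n x) :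
    ∃ φ : V → ℝ, 0 ≤ φ ∧ φ o = 1 ∧ ∀ x, opL G a W φ x = lam0 * φ x := by
  have hbdd : ∀ x, ∃ C, ∀ᶠ n in atTop, ψ n x ∈ Set.Icc 0 C := by
    intro x
    obtain ⟨w⟩ := hG o x
    obtain ⟨C, -, hC⟩ := exists_harnack_const hpos lam0 w
    refine ⟨C, ((w.support.toFinset.eventually_all).2 fun z _ => heq z).mono fun n hn =>
      ⟨hψ0 n x, ?_⟩⟩
    simpa [hψo] using hC (ψ n) (lam n) (hlam0 n) (hψ0 n) fun z hz => hn z (by simpa using hz)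
  -- Pointwise limits along an ultrafilter finer than `atTop` replace a diagonal subsequence.
  set F := Ultrafilter.of (atTop : Filter ℕ)
  have hF : ↑F ≤ (atTop : Filter ℕ) := Ultrafilter.of_le _
  have hlim : ∀ x, ∃ ℓ, Tendsto (fun n => ψ n x) F (𝓝 ℓ) := fun x => by
    obtain ⟨C, hC⟩ := hbdd x
    obtain ⟨ℓ, -, hℓ⟩ := isCompact_Icc.ultrafilter_le_nhds' (F.map fun n => ψ n x) (hF hC)
    exact ⟨ℓ, hℓ⟩
  choose φ hφ using hlim
  refine ⟨φ, fun x => ge_of_tendsto (hφ x) (Eventually.of_forall fun n => hψ0 n x),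
    tendsto_nhds_unique (hφ o) (by simp [hψo]), fun x => ?_⟩
  exact tendsto_nhds_unique_of_eventuallyEq
    (((continuous_opL G a W x).tendsto φ).comp (tendsto_pi_nhds.2 hφ))
    ((hlam.mono_left hF).mul (hφ x)) (hF (heq x))

end Exhaustion

theorem exists_ground_state_general {V : Type*} (G : SimpleGraph V) [G.LocallyFinite]
    (hG : G.Connected)
    (a : V → V → ℝ) (hsym : ∀ x y, a x y = a y x) (hpos : ∀ x y, G.Adj x y → 0 < a x y)
    (W : V → ℝ) (c : ℝ) (hW : ∀ x, c ≤ W x) (lam0 : ℝ)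
    (hlam0 : lam0 = sInf {r : ℝ | ∃ f : V → ℝ, (Function.support f).Finite ∧ f ≠ 0 ∧
        r = (∑ᶠ x, (W x * f x + opA G a f x) * f x) / (∑ᶠ x, f x * f x)}) :
    ∃ φ : V → ℝ, (∀ x, 0 < φ x) ∧ ∀ x, W x * φ x + opA G a φ x = lam0 * φ x := by
  change lam0 = sInf (rayleighSet G a W) at hlam0
  obtain ⟨o⟩ := hG.nonempty
  choose ψ lam hψ0 hψo hlamS heq hlam_le using
    exists_ground_state_ballFinset (W := W) hsym hpos o
  have hbdd : BddBelow (rayleighSet G a W) := ⟨c, by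
    rintro r ⟨f, hf, hf0, rfl⟩
    exact le_rayleigh hsym hpos hW hf hf0⟩
  have hlim : Tendsto lam atTop (𝓝 lam0) := hlam0 ▸
    tendsto_csInf_of_forall_eventually_le hbdd hlamS fun r ⟨f, hf, hf0, hr⟩ =>
      (SimpleGraph.eventually_subset_ballFinset hG o hf).mono fun n hn =>
        hr ▸ hlam_le n f hn hf0
  obtain ⟨φ, hφ0, hφo, hφ⟩ := exists_nonneg_solution_of_tendsto hG hpos hlim
    (fun n => hlam0 ▸ csInf_le hbdd (hlamS n)) hψ0 hψo fun x =>
      (SimpleGraph.eventually_mem_ballFinset hG o x).mono fun n hn => heq n x hn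
  exact ⟨φ, fun x => pos_of_pos_of_walk hpos hφ0 (hG x o).some (fun z _ => hφ z)
    (hφo ▸ one_pos), hφ⟩

/-- Existence of a ground state: a strictly positive pointwise solution of L φ = λ₀ φ,
where λ₀ is the bottom of the spectrum (infimum of the Rayleigh quotient over
nonzero finitely supported functions). -/
theorem exists_ground_state {V : Type*} [Countable V] (G : SimpleGraph V) [G.LocallyFinite]
    (hG : G.Connected)
    (a : V → V → ℝ) (hsym : ∀ x y, a x y = a y x) (hpos : ∀ x y, G.Adj x y → 0 < a x y)
    (W : V → ℝ) (c : ℝ) (hW : ∀ x, c ≤ W x) (lam0 : ℝ)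
    (hlam0 : lam0 = sInf {r : ℝ | ∃ f : V → ℝ, (Function.support f).Finite ∧ f ≠ 0 ∧
        r = (∑ᶠ x, (W x * f x + opA G a f x) * f x) / (∑ᶠ x, f x * f x)}) :
    ∃ φ : V → ℝ, (∀ x, 0 < φ x) ∧ ∀ x, W x * φ x + opA G a φ x = lam0 * φ x :=
  exists_ground_state_general G hG a hsym hpos W c hW lam0 hlam0
end

section
/- (Uniqueness of bounded solutions of the heat equation) Assume sup_x m(x)=M<∞ and sup a_{x,y}=a<∞. If u(x,t) is a bounded solution of Au + ∂u/∂t = 0 on V × [0,∞) with u(x,0) = u₀(x) and |u₀(x)| ≤ N₀ for all x, then |u(x,t)| ≤ N₀ for all (x,t). In particular bounded solutions of the initial value problem are unique. -/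
/-!
Fix a vertex `x`, let `r = d(x, ·)` and `ε > 0`, and consider
`w = u - N₀ - ε (r + (a M + 1) t + 1)`. It is negative at `t = 0`, and, since `u` is bounded,
also outside a finite ball around `x`, where only finitely many ODEs remain. If `w` reached `0`
on the ball for some time in `[0, t]`, then at a point where `w` is maximal over ball × `[0, t]`
it would be a spatial maximum on all of `V`. Since `r` changes by at most `1` along an edge, this gives
`A u ≥ -ε a M` there, hence `∂w/∂t ≤ -ε < 0`. That is impossible at a maximum in time. So
`u(x, t) ≤ N₀ + ε ((a M + 1) t + 1)`. Letting `ε → 0` and applying the bound to `±u` and to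
differences of solutions gives the theorem.
-/

open scoped BigOperators Classical

open Set

theorem HasDerivWithinAt.nonneg_of_isMaxOn_Icc {f : ℝ → ℝ} {f' a b : ℝ} (hab : a < b)
    (hf : HasDerivWithinAt f f' (Icc a b) b) (hmax : IsMaxOn f (Icc a b) b) : 0 ≤ f' := by
  have hcone : a - b ∈ posTangentConeAt (Icc a b) b :=
    sub_mem_posTangentConeAt_of_segment_subset (by rw [segment_symm, segment_eq_Icc hab.le])
  have := hmax.localize.hasFDerivWithinAt_nonpos hf.hasFDerivWithinAt hcone
  simp only [ContinuousLinearMap.toSpanSingleton_apply, smul_eq_mul] at this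
  nlinarith

theorem lt_zero_of_deriv_neg_at_max {ι : Type*} (B : Finset ι) {w w' : ι → ℝ → ℝ} {t : ℝ}
    (ht : 0 ≤ t) (hderiv : ∀ i s, 0 ≤ s → HasDerivWithinAt (w i) (w' i s) (Ici 0) s)
    (hinit : ∀ i, w i 0 < 0) (hout : ∀ i ∉ B, ∀ s ∈ Icc 0 t, w i s < 0)
    (hmax : ∀ i s, 0 < s → s ≤ t → (∀ j, w j s ≤ w i s) → w' i s < 0) (i : ι) : w i t < 0 := by
  by_cases hi : i ∈ B
  swap
  · exact hout i hi t ⟨ht, le_rfl⟩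
  have hB : B.Nonempty := ⟨i, hi⟩
  set g : ℝ → ℝ := fun s => B.sup' hB fun j => w j s
  have hg : ContinuousOn g (Icc 0 t) := ContinuousOn.finset_sup'_apply hB fun j _ s hs =>
    (hderiv j s hs.1).continuousWithinAt.mono Icc_subset_Ici_self
  obtain ⟨t', ht', ht'max⟩ := isCompact_Icc.exists_isMaxOn ⟨0, left_mem_Icc.mpr ht⟩ hg
  obtain ⟨j, hjB, hj⟩ := B.exists_mem_eq_sup' hB fun j => w j t'
  have hjmax : IsMaxOn (w j) (Icc 0 t') t' := fun s hs =>
    ((B.le_sup' (fun k => w k s) hjB).trans ((ht'max ⟨hs.1, hs.2.trans ht'.2⟩).trans hj.le))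
  suffices w j t' < 0 from
    ((B.le_sup' (fun k => w k t) hi).trans (ht'max ⟨ht, le_rfl⟩)).trans_lt (hj.trans_lt this)
  by_contra! hj0
  rcases ht'.1.eq_or_lt with ht'0 | ht'pos
  · exact (hinit j).not_ge (ht'0 ▸ hj0)
  have hglobal : ∀ k, w k t' ≤ w j t' := fun k => by
    by_cases hk : k ∈ B
    · exact hj ▸ B.le_sup' (fun k => w k t') hk
    · exact ((hout k hk t' ht').trans_le hj0).le
  exact (hmax j t' ht'pos ht'.2 hglobal).not_ge
    (((hderiv j t' ht'.1).mono Icc_subset_Ici_self).nonneg_of_isMaxOn_Icc ht'pos hjmax)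

namespace SimpleGraph

variable {V : Type*} {G : SimpleGraph V}

theorem Adj.dist_le_dist_add_one {x y z : V} (h : G.Adj y z) : G.dist x z ≤ G.dist x y + 1 := by
  simpa [dist_eq_one_iff_adj.mpr h] using h.reachable.dist_triangle_right x

theorem Connected.finite_setOf_dist_le [G.LocallyFinite] (hG : G.Connected) (x : V) (R : ℕ) :
    {y | G.dist x y ≤ R}.Finite := by
  induction R generalizing x with
  | zero =>
    refine (finite_singleton x).subset fun y hy => ?_
    exact (hG.dist_eq_zero_iff.mp (Nat.le_zero.mp hy)).symm
  | succ R ih =>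
    refine ((finite_singleton x).union ((G.neighborFinset x).finite_toSet.biUnion
      fun z _ => ih z)).subset fun y hy => ?_
    obtain ⟨p, hp⟩ := hG.exists_walk_length_eq_dist x y
    cases p with
    | nil => exact Or.inl rfl
    | cons hxz q =>
      refine Or.inr (mem_biUnion (by simpa using hxz) ?_)
      have := dist_le q
      simp only [Walk.length_cons, mem_ofPred_eq] at hp hy ⊢
      omega

end SimpleGraph

section Heat

variable {V : Type*} {G : SimpleGraph V} [G.LocallyFinite] {a : V → V → ℝ}

theorem opA_neg (f : V → ℝ) (x : V) : opA G a (fun y => -f y) x = -opA G a f x := by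
  simp only [opA, ← Finset.sum_neg_distrib]
  exact Finset.sum_congr rfl fun y _ => by ring

theorem opA_sub (f g : V → ℝ) (x : V) :
    opA G a (fun y => f y - g y) x = opA G a f x - opA G a g x := by
  simp only [opA, ← Finset.sum_sub_distrib]
  exact Finset.sum_congr rfl fun y _ => by ring

theorem neg_mul_le_opA {f : V → ℝ} {x : V} {b δ : ℝ} {M : ℕ} (hb : 0 ≤ b) (hδ : 0 ≤ δ)
    (ha : ∀ y, G.Adj x y → 0 ≤ a x y) (hub : ∀ y, G.Adj x y → a x y ≤ b)
    (hdeg : G.degree x ≤ M) (hf : ∀ y, G.Adj x y → f y ≤ f x + δ) :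
    -(b * M * δ) ≤ opA G a f x := by
  have hcard : ((G.neighborFinset x).card : ℝ) ≤ M := by
    exact_mod_cast (G.card_neighborFinset_eq_degree x).trans_le hdeg
  calc -(b * M * δ) ≤ (G.neighborFinset x).card • -(b * δ) := by
        rw [nsmul_eq_mul]; nlinarith [mul_nonneg hb hδ]
    _ ≤ opA G a f x := Finset.card_nsmul_le_sum _ _ _ fun y hy => by
        have hadj := (G.mem_neighborFinset x y).mp hy
        nlinarith [ha y hadj, hub y hadj, hf y hadj]

variable (G a) in
def IsHeatSolution (u : V → ℝ → ℝ) : Prop :=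
  ∀ x t, 0 ≤ t → HasDerivWithinAt (u x) (-(opA G a (fun y => u y t) x)) (Ici 0) t

namespace IsHeatSolution

variable {u v : V → ℝ → ℝ}

theorem neg (hu : IsHeatSolution G a u) : IsHeatSolution G a fun x s => -u x s :=
  fun x t ht => by rw [opA_neg]; exact (hu x t ht).neg

theorem sub (hu : IsHeatSolution G a u) (hv : IsHeatSolution G a v) :
    IsHeatSolution G a fun x s => u x s - v x s :=
  fun x t ht => by
    rw [opA_sub, neg_sub, ← neg_sub_neg]
    exact (hu x t ht).sub (hv x t ht)

theorem le_add_mul (hG : G.Connected) (hu : IsHeatSolution G a u)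
    (ha : ∀ x y, G.Adj x y → 0 ≤ a x y) {M : ℕ} (hdeg : ∀ x, G.degree x ≤ M) {b : ℝ}
    (hb : 0 ≤ b) (hub : ∀ x y, G.Adj x y → a x y ≤ b) {N₀ N₁ : ℝ}
    (hbdd : ∀ x t, 0 ≤ t → u x t ≤ N₁) (hinit : ∀ x, u x 0 ≤ N₀) {ε : ℝ} (hε : 0 < ε)
    (x : V) {t : ℝ} (ht : 0 ≤ t) : u x t ≤ N₀ + ε * ((b * M + 1) * t + 1) := by
  set c := b * M + 1
  have hc : 0 ≤ c := by positivity
  obtain ⟨R, hR⟩ := exists_nat_gt ((N₁ - N₀) / ε)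
  rw [div_lt_iff₀ hε] at hR
  set r : V → ℝ := fun y => G.dist x y
  have key := lt_zero_of_deriv_neg_at_max (hG.finite_setOf_dist_le x R).toFinset
    (w := fun y s => u y s - N₀ - ε * (r y + c * s + 1))
    (w' := fun y s => -opA G a (fun z => u z s) y - ε * c) ht ?deriv ?init ?out ?max x
  case deriv =>
    intro y s hs
    have hlin : HasDerivAt (fun s => ε * (r y + c * s + 1)) (ε * c) s := by
      simpa using ((((hasDerivAt_id s).const_mul c).const_add (r y)).add_const 1).const_mul ε
    exact ((hu y s hs).sub_const N₀).sub hlin.hasDerivWithinAt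
  case init =>
    intro y
    nlinarith [hinit y, (Nat.cast_nonneg _ : (0 : ℝ) ≤ r y)]
  case out =>
    intro y hy s hs
    have hRy : (R : ℝ) + 1 ≤ r y := by
      have : R + 1 ≤ G.dist x y := by simpa using hy
      simp only [r]; exact_mod_cast this
    nlinarith [hbdd y s hs.1, mul_nonneg hc hs.1]
  case max =>
    intro y s _ _ hglobal
    have hnbr : ∀ z, G.Adj y z → u z s ≤ u y s + ε := fun z h => by
      have hr : r z ≤ r y + 1 := by simp only [r]; exact_mod_cast h.dist_le_dist_add_one
      nlinarith [hglobal z]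
    have := neg_mul_le_opA hb hε.le (ha y) (hub y) (hdeg y) hnbr
    simp only [c]
    nlinarith
  simp only [r, SimpleGraph.dist_self, Nat.cast_zero, zero_add] at key
  linarith

theorem le_of_le (hG : G.Connected) (hu : IsHeatSolution G a u)
    (ha : ∀ x y, G.Adj x y → 0 ≤ a x y) {M : ℕ} (hdeg : ∀ x, G.degree x ≤ M) {b : ℝ}
    (hub : ∀ x y, G.Adj x y → a x y ≤ b) {N₀ N₁ : ℝ} (hbdd : ∀ x t, 0 ≤ t → u x t ≤ N₁)
    (hinit : ∀ x, u x 0 ≤ N₀) (x : V) {t : ℝ} (ht : 0 ≤ t) : u x t ≤ N₀ := by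
  have hub' : ∀ x y, G.Adj x y → a x y ≤ max b 0 := fun x y h =>
    (hub x y h).trans (le_max_left _ _)
  have hK : 0 < (max b 0 * M + 1) * t + 1 := by positivity
  refine le_of_forall_pos_le_add fun δ hδ => ?_
  have := hu.le_add_mul hG ha hdeg (le_max_right _ _) hub' hbdd hinit (div_pos hδ hK) x ht
  rwa [div_mul_cancel₀ _ hK.ne'] at this

theorem abs_le (hG : G.Connected) (hu : IsHeatSolution G a u)
    (ha : ∀ x y, G.Adj x y → 0 ≤ a x y) {M : ℕ} (hdeg : ∀ x, G.degree x ≤ M) {b : ℝ}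
    (hub : ∀ x y, G.Adj x y → a x y ≤ b) {N₀ N₁ : ℝ} (hbdd : ∀ x t, 0 ≤ t → |u x t| ≤ N₁)
    (hinit : ∀ x, |u x 0| ≤ N₀) (x : V) {t : ℝ} (ht : 0 ≤ t) : |u x t| ≤ N₀ := by
  simp only [_root_.abs_le] at hbdd hinit ⊢
  have hupper := hu.le_of_le hG ha hdeg hub (fun x t ht => (hbdd x t ht).2) (fun x => (hinit x).2)
    x ht
  have hlower := hu.neg.le_of_le hG ha hdeg hub (fun x t ht => neg_le.mp (hbdd x t ht).1)
    (fun x => neg_le.mp (hinit x).1) x ht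
  exact ⟨neg_le.mp hlower, hupper⟩

end IsHeatSolution

end Heat

theorem heat_uniqueness_general {V : Type*} (G : SimpleGraph V) [G.LocallyFinite] (hG : G.Connected)
    (a : V → V → ℝ) (hpos : ∀ x y, G.Adj x y → 0 < a x y)
    (M : ℕ) (hdeg : ∀ x, G.degree x ≤ M) (aa : ℝ) (hub : ∀ x y, G.Adj x y → a x y ≤ aa)
    (u : V → ℝ → ℝ) (N₀ N₁ : ℝ)
    (hbdd : ∀ x t, 0 ≤ t → |u x t| ≤ N₁)
    (hheat : ∀ x t, 0 ≤ t →
      HasDerivWithinAt (u x) (-(opA G a (fun y => u y t) x)) (Set.Ici (0 : ℝ)) t)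
    (hinit : ∀ x, |u x 0| ≤ N₀) :
    (∀ x t, 0 ≤ t → |u x t| ≤ N₀) ∧
    ∀ v : V → ℝ → ℝ, (∃ N₂, ∀ x t, 0 ≤ t → |v x t| ≤ N₂) →
      (∀ x t, 0 ≤ t →
        HasDerivWithinAt (v x) (-(opA G a (fun y => v y t) x)) (Set.Ici (0 : ℝ)) t) →
      (∀ x, v x 0 = u x 0) → ∀ x t, 0 ≤ t → v x t = u x t := by
  have ha : ∀ x y, G.Adj x y → 0 ≤ a x y := fun x y h => (hpos x y h).le
  refine ⟨fun x t ht => IsHeatSolution.abs_le hG hheat ha hdeg hub hbdd hinit x ht, ?_⟩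
  rintro v ⟨N₂, hvbdd⟩ hvheat hvinit x t ht
  have hdiff := (IsHeatSolution.sub hvheat hheat).abs_le hG ha hdeg hub (N₀ := 0)
    (fun x t ht => (abs_sub _ _).trans (add_le_add (hvbdd x t ht) (hbdd x t ht)))
    (fun x => by simp [hvinit x]) x ht
  exact sub_eq_zero.mp (abs_nonpos_iff.mp hdiff)

/-- Bounded solutions of the heat equation Au + ∂u/∂t = 0 with initial data bounded by N₀
stay bounded by N₀; consequently bounded solutions of the initial value problem are unique. -/
theorem heat_uniqueness {V : Type*} (G : SimpleGraph V) [G.LocallyFinite] (hG : G.Connected)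
    (a : V → V → ℝ) (hsym : ∀ x y, a x y = a y x) (hpos : ∀ x y, G.Adj x y → 0 < a x y)
    (M : ℕ) (hdeg : ∀ x, G.degree x ≤ M) (aa : ℝ) (hub : ∀ x y, G.Adj x y → a x y ≤ aa)
    (u : V → ℝ → ℝ) (N₀ N₁ : ℝ)
    (hbdd : ∀ x t, 0 ≤ t → |u x t| ≤ N₁)
    (hheat : ∀ x t, 0 ≤ t →
      HasDerivWithinAt (u x) (-(opA G a (fun y => u y t) x)) (Set.Ici (0 : ℝ)) t)
    (hinit : ∀ x, |u x 0| ≤ N₀) :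
    (∀ x t, 0 ≤ t → |u x t| ≤ N₀) ∧
    ∀ v : V → ℝ → ℝ, (∃ N₂, ∀ x t, 0 ≤ t → |v x t| ≤ N₂) →
      (∀ x t, 0 ≤ t →
        HasDerivWithinAt (v x) (-(opA G a (fun y => v y t) x)) (Set.Ici (0 : ℝ)) t) →
      (∀ x, v x 0 = u x 0) → ∀ x t, 0 ≤ t → v x t = u x t :=
  heat_uniqueness_general G hG a hpos M hdeg aa hub u N₀ N₁ hbdd hheat hinit
end
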